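/- Fix n ≥ 1 and identify Q_{2n} with C_4^{□n} and Q_{6n} with C_4^{□3n}. Suppose E is a source cycle for C_4^{□n} with Latin family (σ_1, …, σ_n), and suppose H is a source cycle for G_{n,3} with Latin family (id, ρ, ρ²), ρ being the cyclic rotation of the three coordinates (so {H, ρ(H), ρ²(H)} is a Hamilton decomposition of G_{n,3}). Then the Hamilton decomposition {g(σ_i(E), H), g(σ_i(E), ρ(H)), g(σ_i(E), ρ²(H)) : 1 ≤ i ≤ n} of C_4^{□3n} is Latin with source cycle F = g(E, H): the permutations τ_1, …, τ_{3n} of Fin(3n) defined block-wise by τ_{i+εn}(j+δn) = σ_i(j) + ((ε+δ) mod 3)·n for 1 ≤ i,j ≤ n and ε,δ ∈ {0,1,2} form a Latin family, and the decomposition equals {τ_k(F) : 1 ≤ k ≤ 3n}. -/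

import Mathlib

open SimpleGraph

/-- The hypercube graph `Q_n` on vertex set `Fin n → Bool`:
two vertices are adjacent iff they differ in exactly one coordinate. -/
def hypercube (n : ℕ) : SimpleGraph (Fin n → Bool) where
  Adj u v := ∃ i, u i ≠ v i ∧ ∀ j, j ≠ i → u j = v j
  symm := by
    constructor
    rintro u v ⟨i, hne, hrest⟩
    exact ⟨i, hne.symm, fun j hj => (hrest j hj).symm⟩
  loopless := by
    constructor
    rintro u ⟨i, hne, -⟩
    exact hne rfl

/-- The cycle graph `C_m` on `ZMod m`: `i` and `j` are adjacent iff
`i - j = 1` or `j - i = 1`. -/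
def cycGraph (m : ℕ) : SimpleGraph (ZMod m) :=
  SimpleGraph.fromRel (fun i j => i - j = 1)

/-- The graph `C_m^{□k}` on `Fin k → ZMod m`: two vertices are adjacent iff they
differ in exactly one coordinate, and in that coordinate they differ by `±1`. -/
def torusGraph (m k : ℕ) : SimpleGraph (Fin k → ZMod m) where
  Adj u v := ∃ i, (u i ≠ v i ∧ (u i - v i = 1 ∨ v i - u i = 1)) ∧ ∀ j, j ≠ i → u j = v j
  symm := by
    constructor
    rintro u v ⟨i, ⟨hne, hpm⟩, hrest⟩
    exact ⟨i, ⟨hne.symm, hpm.symm⟩, fun j hj => (hrest j hj).symm⟩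
  loopless := by
    constructor
    rintro u ⟨i, ⟨hne, -⟩, -⟩
    exact hne rfl

private lemma torus_adj_comp (m k : ℕ) (σ : Equiv.Perm (Fin k)) {u v : Fin k → ZMod m}
    (h : (torusGraph m k).Adj u v) : (torusGraph m k).Adj (u ∘ σ) (v ∘ σ) := by
  obtain ⟨i, ⟨hne, hpm⟩, hrest⟩ := h
  refine ⟨σ.symm i, ⟨?_, ?_⟩, ?_⟩
  · simpa using hne
  · simpa using hpm
  · intro j hj
    have : σ j ≠ i := fun hc => hj (by simp [← hc])
    simpa using hrest (σ j) this

/-- The automorphism of `C_m^{□k}` induced by a permutation `σ` of the axes,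
sending a vertex `v : Fin k → ZMod m` to `v ∘ σ⁻¹`. -/
def permIso (m k : ℕ) (σ : Equiv.Perm (Fin k)) : torusGraph m k ≃g torusGraph m k where
  toEquiv := Equiv.arrowCongr σ (Equiv.refl (ZMod m))
  map_rel_iff' := by
    intro u v
    constructor
    · intro h
      have h2 := torus_adj_comp m k σ h
      have hu : (Equiv.arrowCongr σ (Equiv.refl (ZMod m)) u) ∘ σ = u := by
        funext x; simp
      have hv : (Equiv.arrowCongr σ (Equiv.refl (ZMod m)) v) ∘ σ = v := by
        funext x; simp
      rwa [hu, hv] at h2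
    · intro h
      have h2 := torus_adj_comp m k σ.symm h
      have hu : u ∘ ⇑σ.symm = Equiv.arrowCongr σ (Equiv.refl (ZMod m)) u := by
        funext x; simp
      have hv : v ∘ ⇑σ.symm = Equiv.arrowCongr σ (Equiv.refl (ZMod m)) v := by
        funext x; simp
      rwa [hu, hv] at h2

/-- A Hamilton decomposition of a simple graph `G`: a family of Hamiltonian cycles
whose edge sets are pairwise disjoint and together cover every edge of `G`. -/
def IsHamDecomp {V : Type*} [DecidableEq V] (G : SimpleGraph V) {ι : Type*}
    (C : ι → Σ v, G.Walk v v) : Prop :=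
  (∀ i, (C i).2.IsHamiltonianCycle) ∧
  (∀ i j, i ≠ j → ∀ e, e ∈ (C i).2.edges → e ∉ (C j).2.edges) ∧
  (∀ e ∈ G.edgeSet, ∃ i, e ∈ (C i).2.edges)

section LatinAux

open SimpleGraph

/-- The three-block decomposition of `Fin (3*n)`. -/
def blockEquiv (n : ℕ) (hn : 1 ≤ n) : Fin 3 × Fin n ≃ Fin (3 * n) where
  toFun q := ⟨q.1.val * n + q.2.val, by have := q.1.isLt; have := q.2.isLt; nlinarith⟩
  invFun k := (⟨k.val / n, Nat.div_lt_of_lt_mul (by omega)⟩,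
    ⟨k.val % n, Nat.mod_lt _ (by omega)⟩)
  left_inv := by
    rintro ⟨⟨d, hd⟩, ⟨j, hj⟩⟩
    have h1 : (d * n + j) / n = d := by
      rw [mul_comm d n, Nat.mul_add_div (by omega : 0 < n), Nat.div_eq_of_lt hj]
      omega
    have h2 : (d * n + j) % n = j := by
      rw [mul_comm d n, Nat.mul_add_mod, Nat.mod_eq_of_lt hj]
    simp only [Prod.mk.injEq]
    constructor <;> apply Fin.ext <;> simp [h1, h2]
  right_inv := by
    rintro ⟨k, hk⟩
    apply Fin.ext
    show k / n * n + k % n = k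
    rw [Nat.mul_comm]
    exact Nat.div_add_mod k n

@[simp] lemma blockEquiv_apply (n : ℕ) (hn : 1 ≤ n) (d : Fin 3) (j : Fin n) :
    (blockEquiv n hn (d, j)).val = d.val * n + j.val := rfl

variable {n : ℕ}

/-- The block permutation `τ_{ε,i}` of `Fin (3*n)`. -/
def tauPerm (hn : 1 ≤ n) (σ : Fin n → Equiv.Perm (Fin n)) (ε : Fin 3) (i : Fin n) :
    Equiv.Perm (Fin (3 * n)) :=
  ((blockEquiv n hn).symm.trans ((Equiv.addLeft ε).prodCongr (σ i))).trans (blockEquiv n hn)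

lemma tauPerm_apply_block (hn : 1 ≤ n) (σ : Fin n → Equiv.Perm (Fin n)) (ε : Fin 3) (i : Fin n)
    (δ : Fin 3) (j : Fin n) :
    tauPerm hn σ ε i (blockEquiv n hn (δ, j)) = blockEquiv n hn (ε + δ, σ i j) := by
  simp [tauPerm]

lemma tauPerm_symm_apply_block (hn : 1 ≤ n) (σ : Fin n → Equiv.Perm (Fin n)) (ε : Fin 3)
    (i : Fin n) (δ : Fin 3) (j : Fin n) :
    (tauPerm hn σ ε i).symm (blockEquiv n hn (δ, j)) =
      blockEquiv n hn (δ - ε, (σ i).symm j) := by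
  rw [Equiv.symm_apply_eq, tauPerm_apply_block]
  congr 1
  simp

/-- Component of a triple. -/
def comp3 {α : Type*} (c : Fin 3) (p : α × α × α) : α := ![p.1, p.2.1, p.2.2] c

@[simp] lemma comp3_zero {α : Type*} (p : α × α × α) : comp3 0 p = p.1 := rfl
@[simp] lemma comp3_one {α : Type*} (p : α × α × α) : comp3 1 p = p.2.1 := rfl
@[simp] lemma comp3_two {α : Type*} (p : α × α × α) : comp3 2 p = p.2.2 := rfl

lemma triple_ext {α : Type*} {p q : α × α × α} (h : ∀ c, comp3 c p = comp3 c q) : p = q := by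
  exact Prod.ext (h 0) (Prod.ext (h 1) (h 2))

lemma boxProd3_adj {α : Type*} {G : SimpleGraph α} {P Q : α × α × α} :
    (G □ (G □ G)).Adj P Q ↔
      ∃ c : Fin 3, G.Adj (comp3 c P) (comp3 c Q) ∧ ∀ d, d ≠ c → comp3 d P = comp3 d Q := by
  rw [SimpleGraph.boxProd_adj, SimpleGraph.boxProd_adj]
  constructor
  · rintro (⟨h, h23⟩ | ⟨(⟨h, h3⟩ | ⟨h, h2⟩), h1⟩)
    · refine ⟨0, h, ?_⟩
      intro d hd
      fin_cases d
      · exact absurd rfl hd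
      · simpa using congrArg Prod.fst h23
      · simpa using congrArg Prod.snd h23
    · refine ⟨1, h, ?_⟩
      intro d hd
      fin_cases d
      · simpa using h1
      · exact absurd rfl hd
      · simpa using h3
    · refine ⟨2, h, ?_⟩
      intro d hd
      fin_cases d
      · simpa using h1
      · simpa using h2
      · exact absurd rfl hd
  · rintro ⟨c, h, hrest⟩
    fin_cases c
    · exact Or.inl ⟨h, Prod.ext (by simpa using hrest 1 (by decide))
        (by simpa using hrest 2 (by decide))⟩
    · exact Or.inr ⟨Or.inl ⟨h, by simpa using hrest 2 (by decide)⟩,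
        by simpa using hrest 0 (by decide)⟩
    · exact Or.inr ⟨Or.inr ⟨h, by simpa using hrest 1 (by decide)⟩,
        by simpa using hrest 0 (by decide)⟩

@[simp] lemma permIso_apply (m k : ℕ) (σ : Equiv.Perm (Fin k)) (v : Fin k → ZMod m) (x : Fin k) :
    permIso m k σ v x = v (σ.symm x) := rfl

lemma permIso_one (m k : ℕ) (v : Fin k → ZMod m) : permIso m k 1 v = v := by
  funext x; rfl

lemma cyc_adj_succ {N : ℕ} (hN : 1 < N) (a : ZMod N) : (cycGraph N).Adj a (a + 1) := by
  haveI : Fact (1 < N) := ⟨hN⟩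
  refine ⟨?_, Or.inr (by ring)⟩
  intro h
  have : (1 : ZMod N) = 0 := by
    have := h
    rwa [eq_comm, add_eq_left] at this
  exact one_ne_zero this

lemma cyc_adj_cases {N : ℕ} {x y : ZMod N} (h : (cycGraph N).Adj x y) :
    y = x + 1 ∨ x = y + 1 := by
  obtain ⟨-, h | h⟩ := h
  · right; rw [← h]; ring
  · left; rw [← h]; ring

/-- Every edge of a Hamiltonian cycle enumerated by `φ` is of the form `s(φ a, φ (a+1))`. -/
lemma edges_eq_enum {V : Type*} [Fintype V] [DecidableEq V] {N : ℕ} (h2 : 2 < N)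
    (hcard : Fintype.card V = N) {G : SimpleGraph V} {v₀ : V} {E : G.Walk v₀ v₀}
    (hE : E.IsHamiltonianCycle) (φ : ZMod N → V) (hφ : Function.Bijective φ)
    (hφE : ∀ a, s(φ a, φ (a + 1)) ∈ E.edges) :
    ∀ z ∈ E.edges, ∃ a : ZMod N, z = s(φ a, φ (a + 1)) := by
  haveI : NeZero N := ⟨by omega⟩
  have h2' : (2 : ZMod N) ≠ 0 := by
    intro h
    have : ((2 : ℕ) : ZMod N) = 0 := by exact_mod_cast h
    rw [ZMod.natCast_eq_zero_iff] at this
    have := Nat.le_of_dvd (by norm_num) this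
    omega
  set S : Finset (Sym2 V) := Finset.univ.image (fun a : ZMod N => s(φ a, φ (a + 1))) with hS
  have hinj : Function.Injective (fun a : ZMod N => s(φ a, φ (a + 1))) := by
    intro a b hab
    simp only [Sym2.eq_iff] at hab
    rcases hab with ⟨h1, -⟩ | ⟨h1, h3⟩
    · exact hφ.injective h1
    · have hb : a = b + 1 := hφ.injective h1
      have ha : a + 1 = b := hφ.injective h3
      exfalso
      apply h2'
      have h4 : a + 1 + 1 = a := by rw [ha, ← hb]
      have h5 : a + 2 = a := by linear_combination h4
      exact add_eq_left.mp h5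
  have hcardS : S.card = N := by
    rw [hS, Finset.card_image_of_injective _ hinj, Finset.card_univ, ZMod.card]
  have hsub : S ⊆ E.edges.toFinset := by
    intro z hz
    rw [hS] at hz
    obtain ⟨a, -, rfl⟩ := Finset.mem_image.mp hz
    exact List.mem_toFinset.mpr (hφE a)
  have hcardT : E.edges.toFinset.card = N := by
    rw [List.toFinset_card_of_nodup hE.isCycle.edges_nodup, SimpleGraph.Walk.length_edges,
      hE.length_eq, hcard]
  have hST : S = E.edges.toFinset := Finset.eq_of_subset_of_card_le hsub (by omega)
  intro z hz
  have : z ∈ S := hST ▸ List.mem_toFinset.mpr hz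
  obtain ⟨a, -, rfl⟩ := Finset.mem_image.mp this
  exact ⟨a, rfl⟩

end LatinAux
/-- Latin Hamilton decompositions transfer from `C₄^{□n}` and `G_{n,3}` to `C₄^{□3n}`:
if `E` is a source cycle for `C₄^{□n}` with Latin family `(σ₁, …, σₙ)` and `H` is a
source cycle for `G_{n,3} = C_N □ C_N □ C_N` (`N = 4^n`) with Latin family
`(id, ρ, ρ²)` (`ρ` the cyclic rotation `r` of the three coordinates), then the
Hamilton decomposition `{g(σᵢ(E), H), g(σᵢ(E), ρ(H)), g(σᵢ(E), ρ²(H))}` of `C₄^{□3n}`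
(pulled back along the identification `e : C₄^{□3n} ≅ C₄^{□n} □ C₄^{□n} □ C₄^{□n}`)
is Latin with source cycle `F = g(E, H)`: the block permutations
`τ_{i+εn}(j+δn) = σᵢ(j) + ((ε+δ) mod 3)·n` form a Latin family and the decomposition
consists exactly of the cycles `τ_k(F)`. -/
theorem latin_transfer_three_dim (n : ℕ) (hn : 1 ≤ n)
    (v₀ : Fin n → ZMod 4) (E : (torusGraph 4 n).Walk v₀ v₀) (hE : E.IsHamiltonianCycle)
    (σ : Fin n → Equiv.Perm (Fin n)) (hσ1 : σ ⟨0, hn⟩ = 1)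
    (hLatin : ∀ j, Function.Bijective (fun i => σ i j))
    (hEdecomp : IsHamDecomp (torusGraph 4 n)
      (fun i => ⟨_, E.map (permIso 4 n (σ i)).toHom⟩))
    (p₀ : ZMod (4 ^ n) × ZMod (4 ^ n) × ZMod (4 ^ n))
    (H : (cycGraph (4 ^ n) □ (cycGraph (4 ^ n) □ cycGraph (4 ^ n))).Walk p₀ p₀)
    (hH : H.IsHamiltonianCycle)
    (r : (cycGraph (4 ^ n) □ (cycGraph (4 ^ n) □ cycGraph (4 ^ n))) →g
         (cycGraph (4 ^ n) □ (cycGraph (4 ^ n) □ cycGraph (4 ^ n))))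
    (hr : ∀ p : ZMod (4 ^ n) × ZMod (4 ^ n) × ZMod (4 ^ n), r p = (p.2.2, p.1, p.2.1))
    (hHdecomp : IsHamDecomp (cycGraph (4 ^ n) □ (cycGraph (4 ^ n) □ cycGraph (4 ^ n)))
      ![⟨p₀, H⟩, ⟨_, H.map r⟩, ⟨_, (H.map r).map r⟩])
    (φ : ZMod (4 ^ n) → (Fin n → ZMod 4)) (hφ : Function.Bijective φ)
    (hφE : ∀ a : ZMod (4 ^ n), s(φ a, φ (a + 1)) ∈ E.edges)
    (ψ : Fin n → ((cycGraph (4 ^ n) □ (cycGraph (4 ^ n) □ cycGraph (4 ^ n))) →g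
                  (torusGraph 4 n □ (torusGraph 4 n □ torusGraph 4 n))))
    (hψ : ∀ i (p : ZMod (4 ^ n) × ZMod (4 ^ n) × ZMod (4 ^ n)),
      ψ i p = (permIso 4 n (σ i) (φ p.1),
               permIso 4 n (σ i) (φ p.2.1), permIso 4 n (σ i) (φ p.2.2)))
    (e : torusGraph 4 (3 * n) ≃g (torusGraph 4 n □ (torusGraph 4 n □ torusGraph 4 n)))
    (he : ∀ w : Fin (3 * n) → ZMod 4,
      e w = (fun i : Fin n => w ⟨i.val, by have := i.isLt; omega⟩,
             fun i : Fin n => w ⟨n + i.val, by have := i.isLt; omega⟩,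
             fun i : Fin n => w ⟨2 * n + i.val, by have := i.isLt; omega⟩)) :
    ∃ τ : Fin 3 → Fin n → Equiv.Perm (Fin (3 * n)),
      (∀ (ε : Fin 3) (i : Fin n) (δ : Fin 3) (j : Fin n),
        τ ε i ⟨δ.val * n + j.val, by have := δ.isLt; have := j.isLt; nlinarith⟩ =
          ⟨(σ i j).val + (ε + δ).val * n,
            by have := (σ i j).isLt; have := (ε + δ).isLt; nlinarith⟩) ∧
      τ 0 ⟨0, hn⟩ = 1 ∧
      (∀ j : Fin (3 * n), Function.Bijective (fun q : Fin 3 × Fin n => τ q.1 q.2 j)) ∧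
      IsHamDecomp (torusGraph 4 (3 * n))
        (fun q : Fin n × Fin 3 =>
          ⟨_, ((![(⟨p₀, H⟩ : Σ p,
                    (cycGraph (4 ^ n) □ (cycGraph (4 ^ n) □ cycGraph (4 ^ n))).Walk p p),
                  ⟨_, H.map r⟩, ⟨_, (H.map r).map r⟩] q.2).2.map (ψ q.1)).map
                e.symm.toHom⟩) ∧
      (∀ (i : Fin n) (ε : Fin 3) (x : Sym2 (Fin (3 * n) → ZMod 4)),
        x ∈ (((![(⟨p₀, H⟩ : Σ p,
                   (cycGraph (4 ^ n) □ (cycGraph (4 ^ n) □ cycGraph (4 ^ n))).Walk p p),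
                 ⟨_, H.map r⟩, ⟨_, (H.map r).map r⟩] ε).2.map (ψ i)).map e.symm.toHom).edges ↔
        x ∈ (((H.map (ψ ⟨0, hn⟩)).map e.symm.toHom).map
              (permIso 4 (3 * n) (τ ε i)).toHom).edges) := by
  classical
  have hN4 : 4 ≤ 4 ^ n := by
    calc 4 = 4 ^ 1 := by norm_num
    _ ≤ 4 ^ n := Nat.pow_le_pow_right (by norm_num) hn
  have hN1 : 1 < 4 ^ n := by omega
  have hcardV : Fintype.card (Fin n → ZMod 4) = 4 ^ n := by
    simp [ZMod.card]
  -- the enumeration equivalence and its permuted variants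
  set Φ : Fin n → (ZMod (4 ^ n) ≃ (Fin n → ZMod 4)) :=
    fun i => (Equiv.ofBijective φ hφ).trans (permIso 4 n (σ i)).toEquiv with hΦ
  have hΦ_apply : ∀ i a, Φ i a = permIso 4 n (σ i) (φ a) := fun i a => rfl
  have hψ' : ∀ i p, ψ i p = (Φ i p.1, Φ i p.2.1, Φ i p.2.2) := by
    intro i p
    rw [hψ]
    rfl
  have hψcomp : ∀ (c : Fin 3) i p, comp3 c (ψ i p) = Φ i (comp3 c p) := by
    intro c i p
    fin_cases c <;> simp [hψ']
  have hψbij : ∀ i, Function.Bijective (ψ i) := by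
    intro i
    constructor
    · intro p q h
      apply triple_ext
      intro c
      apply (Φ i).injective
      rw [← hψcomp, ← hψcomp, h]
    · intro U
      refine ⟨((Φ i).symm U.1, (Φ i).symm U.2.1, (Φ i).symm U.2.2), ?_⟩
      rw [hψ']
      simp
  have hesymm_bij : Function.Bijective ⇑(e.symm.toHom) := e.symm.toEquiv.bijective
  have hesymm_inj : Function.Injective ⇑(e.symm.toHom) := hesymm_bij.injective
  -- edge enumeration of E
  have hEenum : ∀ z ∈ E.edges, ∃ a : ZMod (4 ^ n), z = s(φ a, φ (a + 1)) :=
    edges_eq_enum (by omega) hcardV hE φ hφ hφE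
  -- membership of block edges in the cycles σ_i(E)
  have hmemE : ∀ (i : Fin n) (x y : ZMod (4 ^ n)), (cycGraph (4 ^ n)).Adj x y →
      s(Φ i x, Φ i y) ∈ (E.map (permIso 4 n (σ i)).toHom).edges := by
    intro i x y h
    rw [SimpleGraph.Walk.edges_map]
    rcases cyc_adj_cases h with h1 | h1
    · subst h1
      have := List.mem_map_of_mem (f := Sym2.map ⇑(permIso 4 n (σ i)).toHom) (hφE x)
      simpa [hΦ_apply] using this
    · subst h1
      have := List.mem_map_of_mem (f := Sym2.map ⇑(permIso 4 n (σ i)).toHom) (hφE y)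
      rw [Sym2.eq_swap]
      simpa [hΦ_apply] using this
  -- the key "same index" lemma
  have key_same : ∀ (i i' : Fin n) (P Q P' Q' : ZMod (4 ^ n) × ZMod (4 ^ n) × ZMod (4 ^ n)),
      (cycGraph (4 ^ n) □ (cycGraph (4 ^ n) □ cycGraph (4 ^ n))).Adj P Q →
      (cycGraph (4 ^ n) □ (cycGraph (4 ^ n) □ cycGraph (4 ^ n))).Adj P' Q' →
      ψ i P = ψ i' P' → ψ i Q = ψ i' Q' → i = i' := by
    intro i i' P Q P' Q' h h' hPP' hQQ'
    obtain ⟨c, hadj, hrest⟩ := boxProd3_adj.mp h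
    obtain ⟨c', hadj', hrest'⟩ := boxProd3_adj.mp h'
    have hcomp : ∀ d, Φ i (comp3 d P) = Φ i' (comp3 d P') := by
      intro d; rw [← hψcomp, ← hψcomp, hPP']
    have hcompQ : ∀ d, Φ i (comp3 d Q) = Φ i' (comp3 d Q') := by
      intro d; rw [← hψcomp, ← hψcomp, hQQ']
    have hcc : c = c' := by
      by_contra hne
      have h1 : comp3 c P' = comp3 c Q' := hrest' c hne
      have : comp3 c P = comp3 c Q := by
        apply (Φ i).injective
        rw [hcomp, hcompQ, h1]
      exact hadj.ne this
    subst hcc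
    by_contra hii
    have hy : s(Φ i (comp3 c P), Φ i (comp3 c Q)) ∈
        (E.map (permIso 4 n (σ i)).toHom).edges := hmemE i _ _ hadj
    have hy' : s(Φ i (comp3 c P), Φ i (comp3 c Q)) ∈
        (E.map (permIso 4 n (σ i')).toHom).edges := by
      rw [hcomp, hcompQ]
      exact hmemE i' _ _ hadj'
    exact hEdecomp.2.1 i i' hii _ hy hy'
  -- the Latin family
  refine ⟨fun ε i => tauPerm hn σ ε i, ?_, ?_, ?_, ⟨?_, ?_, ?_⟩, ?_⟩
  · -- block formula
    intro ε i δ j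
    have h1 : (⟨δ.val * n + j.val, by have := δ.isLt; have := j.isLt; nlinarith⟩ : Fin (3 * n)) =
        blockEquiv n hn (δ, j) := rfl
    rw [h1, tauPerm_apply_block]
    apply Fin.ext
    simp [Nat.add_comm]
  · -- τ 0 0 = 1
    apply Equiv.ext
    intro k
    obtain ⟨⟨d, j⟩, rfl⟩ : ∃ q, blockEquiv n hn q = k :=
      ⟨_, (blockEquiv n hn).apply_symm_apply k⟩
    rw [tauPerm_apply_block, hσ1]
    simp
  · -- Latin property
    intro k
    obtain ⟨⟨d, c⟩, rfl⟩ : ∃ q, blockEquiv n hn q = k :=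
      ⟨_, (blockEquiv n hn).apply_symm_apply k⟩
    have hfe : (fun q : Fin 3 × Fin n => tauPerm hn σ q.1 q.2 (blockEquiv n hn (d, c))) =
        ⇑(blockEquiv n hn) ∘ (Prod.map (fun ε : Fin 3 => ε + d) (fun i => σ i c)) := by
      funext q
      rw [tauPerm_apply_block]
      rfl
    rw [hfe]
    exact (blockEquiv n hn).bijective.comp
      ((Equiv.addRight d).bijective.prodMap (hLatin c))
  · -- Hamiltonicity of each cycle in the family
    intro q
    exact ((hHdecomp.1 q.2).map (hψbij q.1)).map hesymm_bij
  · -- pairwise disjointness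
    rintro ⟨i, ε⟩ ⟨i', ε'⟩ hqq x hx hx'
    simp only [SimpleGraph.Walk.edges_map, List.mem_map] at hx hx'
    obtain ⟨z, hz, hzx⟩ := hx
    obtain ⟨z', hz', hzx'⟩ := hx'
    obtain ⟨w, hw, rfl⟩ := hz
    obtain ⟨w', hw', rfl⟩ := hz'
    have hzz : Sym2.map (ψ i) w = Sym2.map (ψ i') w' :=
      Sym2.map.injective hesymm_inj (by rw [hzx, ← hzx'])
    obtain ⟨⟨P, Q⟩, rfl⟩ := w.exists_rep
    obtain ⟨⟨P', Q'⟩, rfl⟩ := w'.exists_rep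
    have hadj : (cycGraph (4 ^ n) □ (cycGraph (4 ^ n) □ cycGraph (4 ^ n))).Adj P Q := by
      have := SimpleGraph.Walk.edges_subset_edgeSet _ hw
      rwa [SimpleGraph.mem_edgeSet] at this
    have hadj' : (cycGraph (4 ^ n) □ (cycGraph (4 ^ n) □ cycGraph (4 ^ n))).Adj P' Q' := by
      have := SimpleGraph.Walk.edges_subset_edgeSet _ hw'
      rwa [SimpleGraph.mem_edgeSet] at this
    have hii : i = i' := by
      have hzz2 := hzz
      rw [show (Quot.mk _ (P, Q) : Sym2 _) = s(P, Q) from rfl,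
        show (Quot.mk _ (P', Q') : Sym2 _) = s(P', Q') from rfl,
        Sym2.map_pair_eq, Sym2.map_pair_eq, Sym2.eq_iff] at hzz2
      rcases hzz2 with ⟨h1, h2⟩ | ⟨h1, h2⟩
      · exact key_same i i' P Q P' Q' hadj hadj' h1 h2
      · exact key_same i i' P Q Q' P' hadj hadj'.symm h1 h2
    subst hii
    have hee : ε ≠ ε' := fun h => hqq (by rw [h])
    have hweq : (Quot.mk _ (P, Q) : Sym2 _) = Quot.mk _ (P', Q') :=
      Sym2.map.injective (hψbij i).injective hzz
    exact hHdecomp.2.1 ε ε' hee _ (hweq ▸ hw) hw'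
  · -- covering
    intro x hx
    obtain ⟨⟨u, v⟩, rfl⟩ := x.exists_rep
    rw [SimpleGraph.mem_edgeSet] at hx
    have hUV : (torusGraph 4 n □ (torusGraph 4 n □ torusGraph 4 n)).Adj (e u) (e v) :=
      e.map_rel_iff.mpr hx
    obtain ⟨c, hadj, hrest⟩ := boxProd3_adj.mp hUV
    obtain ⟨i, hi⟩ := hEdecomp.2.2 s(comp3 c (e u), comp3 c (e v))
      ((torusGraph 4 n).mem_edgeSet.mpr hadj)
    rw [SimpleGraph.Walk.edges_map, List.mem_map] at hi
    obtain ⟨z, hzE, hzeq⟩ := hi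
    obtain ⟨a, rfl⟩ := hEenum z hzE
    set P := ((Φ i).symm (e u).1, (Φ i).symm (e u).2.1, (Φ i).symm (e u).2.2) with hP
    set Q := ((Φ i).symm (e v).1, (Φ i).symm (e v).2.1, (Φ i).symm (e v).2.2) with hQ
    have hψP : ψ i P = e u := by rw [hψ']; simp [hP]
    have hψQ : ψ i Q = e v := by rw [hψ']; simp [hQ]
    have hPc : ∀ d, comp3 d P = (Φ i).symm (comp3 d (e u)) := by
      intro d; fin_cases d <;> simp [hP]
    have hQc : ∀ d, comp3 d Q = (Φ i).symm (comp3 d (e v)) := by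
      intro d; fin_cases d <;> simp [hQ]
    rw [Sym2.map_pair_eq, Sym2.eq_iff] at hzeq
    have hΦa : ∀ b, (permIso 4 n (σ i)).toHom (φ b) = Φ i b := fun b => rfl
    have hadjPQ : (cycGraph (4 ^ n) □ (cycGraph (4 ^ n) □ cycGraph (4 ^ n))).Adj P Q := by
      rw [boxProd3_adj]
      refine ⟨c, ?_, ?_⟩
      · rw [hPc, hQc]
        rcases hzeq with ⟨h1, h2⟩ | ⟨h1, h2⟩
        · rw [← h1, ← h2, hΦa, hΦa, Equiv.symm_apply_apply, Equiv.symm_apply_apply]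
          exact cyc_adj_succ hN1 a
        · rw [← h1, ← h2, hΦa, hΦa, Equiv.symm_apply_apply, Equiv.symm_apply_apply]
          exact (cyc_adj_succ hN1 a).symm
      · intro d hd
        rw [hPc, hQc, hrest d hd]
    obtain ⟨ε, hε⟩ := hHdecomp.2.2 s(P, Q) ((cycGraph (4 ^ n) □ (cycGraph (4 ^ n) □ cycGraph (4 ^ n))).mem_edgeSet.mpr hadjPQ)
    refine ⟨(i, ε), ?_⟩
    simp only [SimpleGraph.Walk.edges_map, List.mem_map]
    refine ⟨Sym2.map (ψ i) s(P, Q), ⟨s(P, Q), hε, rfl⟩, ?_⟩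
    rw [Sym2.map_pair_eq, hψP, hψQ, Sym2.map_pair_eq,
      show e.symm.toHom (e u) = u from e.symm_apply_apply u,
      show e.symm.toHom (e v) = v from e.symm_apply_apply v]
  · -- Latin description of the decomposition
    have idx0 : ∀ j : Fin n, (⟨j.val, by have := j.isLt; omega⟩ : Fin (3 * n)) =
        blockEquiv n hn (0, j) := fun j => Fin.ext (by simp)
    have idx1 : ∀ j : Fin n, (⟨n + j.val, by have := j.isLt; omega⟩ : Fin (3 * n)) =
        blockEquiv n hn (1, j) := fun j => Fin.ext (by simp)
    have idx2 : ∀ j : Fin n, (⟨2 * n + j.val, by have := j.isLt; omega⟩ : Fin (3 * n)) =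
        blockEquiv n hn (2, j) := fun j => Fin.ext (by simp)
    have hw : ∀ p : ZMod (4 ^ n) × ZMod (4 ^ n) × ZMod (4 ^ n),
        e (e.symm.toHom (ψ ⟨0, hn⟩ p)) = (φ p.1, φ p.2.1, φ p.2.2) := by
      intro p
      rw [show (e (e.symm.toHom (ψ ⟨0, hn⟩ p)) : _) = ψ ⟨0, hn⟩ p from
        e.apply_symm_apply _, hψ']
      have h1 : ∀ a, Φ ⟨0, hn⟩ a = φ a := by
        intro a; rw [hΦ_apply, hσ1, permIso_one]
      rw [h1, h1, h1]
    have hwg : ∀ (i : Fin n) (p : ZMod (4 ^ n) × ZMod (4 ^ n) × ZMod (4 ^ n)),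
        e (e.symm.toHom (ψ i p)) = (Φ i p.1, Φ i p.2.1, Φ i p.2.2) := by
      intro i p
      rw [show (e (e.symm.toHom (ψ i p)) : _) = ψ i p from e.apply_symm_apply _, hψ']
    have hwcomp : ∀ (i : Fin n) (p : ZMod (4 ^ n) × ZMod (4 ^ n) × ZMod (4 ^ n))
        (d : Fin 3) (j : Fin n),
        (e.symm.toHom (ψ i p)) (blockEquiv n hn (d, j)) =
          φ (comp3 d p) ((σ i).symm j) := by
      intro i p d j
      have h := hwg i p
      rw [he] at h
      fin_cases d
      · have h2 := congrFun (congrArg Prod.fst h) j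
        simp only at h2
        rw [idx0 j, hΦ_apply, permIso_apply] at h2
        exact h2
      · have h2 := congrFun (congrArg (fun q => q.2.1) h) j
        simp only at h2
        rw [idx1 j, hΦ_apply, permIso_apply] at h2
        exact h2
      · have h2 := congrFun (congrArg (fun q => q.2.2) h) j
        simp only at h2
        rw [idx2 j, hΦ_apply, permIso_apply] at h2
        exact h2
    have hrcomp : ∀ (ε d : Fin 3) (p : ZMod (4 ^ n) × ZMod (4 ^ n) × ZMod (4 ^ n)),
        comp3 d (![p, r p, r (r p)] ε) = comp3 (d - ε) p := by
      intro ε d p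
      fin_cases ε <;> fin_cases d <;> simp [hr] <;> rfl
    have permIso_toHom_apply : ∀ (τ' : Equiv.Perm (Fin (3 * n)))
        (v : Fin (3 * n) → ZMod 4) (x : Fin (3 * n)),
        (permIso 4 (3 * n) τ').toHom v x = v (τ'.symm x) := fun _ _ _ => rfl
    have hkey : ∀ (ε : Fin 3) (i : Fin n) (p : ZMod (4 ^ n) × ZMod (4 ^ n) × ZMod (4 ^ n)),
        e.symm.toHom (ψ i (![p, r p, r (r p)] ε)) =
          (permIso 4 (3 * n) (tauPerm hn σ ε i)).toHom (e.symm.toHom (ψ ⟨0, hn⟩ p)) := by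
      intro ε i p
      funext k
      obtain ⟨⟨d, j⟩, rfl⟩ : ∃ q, blockEquiv n hn q = k :=
        ⟨_, (blockEquiv n hn).apply_symm_apply k⟩
      rw [permIso_toHom_apply, tauPerm_symm_apply_block, hwcomp, hwcomp, hrcomp, hσ1]
      rfl
    intro i ε x
    fin_cases ε
    · have heq : ((H.map (ψ i)).map e.symm.toHom).edges =
          (((H.map (ψ ⟨0, hn⟩)).map e.symm.toHom).map
            (permIso 4 (3 * n) (tauPerm hn σ 0 i)).toHom).edges := by
        simp only [SimpleGraph.Walk.edges_map, List.map_map]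
        congr 1
        funext z
        obtain ⟨⟨P, Q⟩, rfl⟩ := z.exists_rep
        simp only [Function.comp_apply,
          show (Quot.mk _ (P, Q) : Sym2 _) = s(P, Q) from rfl, Sym2.map_pair_eq]
        rw [show e.symm.toHom (ψ i P) = _ from hkey 0 i P,
          show e.symm.toHom (ψ i Q) = _ from hkey 0 i Q]
      exact iff_of_eq (congrArg (fun l => x ∈ l) heq)
    · have heq : (((H.map r).map (ψ i)).map e.symm.toHom).edges =
          (((H.map (ψ ⟨0, hn⟩)).map e.symm.toHom).map
            (permIso 4 (3 * n) (tauPerm hn σ 1 i)).toHom).edges := by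
        simp only [SimpleGraph.Walk.edges_map, List.map_map]
        congr 1
        funext z
        obtain ⟨⟨P, Q⟩, rfl⟩ := z.exists_rep
        simp only [Function.comp_apply,
          show (Quot.mk _ (P, Q) : Sym2 _) = s(P, Q) from rfl, Sym2.map_pair_eq]
        rw [show e.symm.toHom (ψ i (r P)) = _ from hkey 1 i P,
          show e.symm.toHom (ψ i (r Q)) = _ from hkey 1 i Q]
      exact iff_of_eq (congrArg (fun l => x ∈ l) heq)
    · have heq : ((((H.map r).map r).map (ψ i)).map e.symm.toHom).edges =
          (((H.map (ψ ⟨0, hn⟩)).map e.symm.toHom).map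
            (permIso 4 (3 * n) (tauPerm hn σ 2 i)).toHom).edges := by
        simp only [SimpleGraph.Walk.edges_map, List.map_map]
        congr 1
        funext z
        obtain ⟨⟨P, Q⟩, rfl⟩ := z.exists_rep
        simp only [Function.comp_apply,
          show (Quot.mk _ (P, Q) : Sym2 _) = s(P, Q) from rfl, Sym2.map_pair_eq]
        rw [show e.symm.toHom (ψ i (r (r P))) = _ from hkey 2 i P,
          show e.symm.toHom (ψ i (r (r Q))) = _ from hkey 2 i Q]
      exact iff_of_eq (congrArg (fun l => x ∈ l) heq)
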